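/- arXiv:1910.06369 — 2 statements merged into one kernel-verified Lean document; each statement's English description precedes it below -/
import Mathlib

section
/- For every a > 0, sup_{τ > 0} e^{-a/τ} / √(τ(τ+1)) ≤ e^{-1/2} / √(a(a+1)). -/
/-!
Put `x = a / τ`. Since `e^y ≥ 1 + y`, we get `e^{x - 1/2} ≥ x + 1/2`, and a direct expansion shows
`a (a + 1) ≤ (x + 1/2)² τ (τ + 1)`. Taking square roots, `√(a(a+1)) ≤ e^{a/τ - 1/2} √(τ(τ+1))`,
which rearranges to the bound.
-/

open Real

lemma add_half_le_exp_sub_half (x : ℝ) : x + 1 / 2 ≤ exp (x - 1 / 2) := by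
  linarith [add_one_le_exp (x - 1 / 2)]

lemma mul_add_one_le_sq_mul {a τ : ℝ} (ha : 0 ≤ a) (hτ : 0 < τ) :
    a * (a + 1) ≤ (a / τ + 1 / 2) ^ 2 * (τ * (τ + 1)) := by
  have gap : (a / τ + 1 / 2) ^ 2 * (τ * (τ + 1))
      = a * (a + 1) + (a ^ 2 + a * τ ^ 2 + τ ^ 2 * (τ + 1) / 4) / τ := by
    field_simp
    ring
  rw [gap]
  have : 0 ≤ (a ^ 2 + a * τ ^ 2 + τ ^ 2 * (τ + 1) / 4) / τ := by positivity
  linarith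

lemma sqrt_mul_add_one_le_exp_mul_sqrt {a τ : ℝ} (ha : 0 ≤ a) (hτ : 0 < τ) :
    √(a * (a + 1)) ≤ exp (a / τ - 1 / 2) * √(τ * (τ + 1)) := by
  have hx : 0 ≤ a / τ + 1 / 2 := by positivity
  calc √(a * (a + 1)) ≤ √((a / τ + 1 / 2) ^ 2 * (τ * (τ + 1))) :=
        sqrt_le_sqrt (mul_add_one_le_sq_mul ha hτ)
    _ = (a / τ + 1 / 2) * √(τ * (τ + 1)) := by rw [sqrt_mul (sq_nonneg _), sqrt_sq hx]
    _ ≤ exp (a / τ - 1 / 2) * √(τ * (τ + 1)) := by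
        gcongr
        exact add_half_le_exp_sub_half _

/-- For every `a > 0`, `sup_{τ>0} e^{-a/τ}/√(τ(τ+1)) ≤ e^{-1/2}/√(a(a+1))`. -/
theorem rho_sup_bound (a : ℝ) (ha : 0 < a) :
    ∀ τ : ℝ, 0 < τ →
      Real.exp (-a / τ) / Real.sqrt (τ * (τ + 1))
        ≤ Real.exp (-(1 / 2)) / Real.sqrt (a * (a + 1)) := by
  intro τ hτ
  rw [div_le_div_iff₀ (by positivity) (by positivity)]
  calc exp (-a / τ) * √(a * (a + 1))
      ≤ exp (-a / τ) * (exp (a / τ - 1 / 2) * √(τ * (τ + 1))) := by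
        gcongr
        exact sqrt_mul_add_one_le_exp_mul_sqrt ha.le hτ
    _ = exp (-(1 / 2)) * √(τ * (τ + 1)) := by
        rw [← mul_assoc, ← exp_add, neg_div]
        ring_nf
end

section
/- For all x > 0 and t > 0 one has |φ_t'(x + i√(tx))| ≥ e^{-1} t / ((1+x)² + xt), where φ_t(z) = (z/(z+1)) e^{-t/z}. -/
open Complex

/-- For `φ_t(z) = (z/(z+1)) e^{-t/z}`, one has the lower bound
`|φ_t'(x + i√(tx))| ≥ e⁻¹ t / ((1+x)² + xt)` for all `x, t > 0`. -/
theorem phi_t_deriv_lower_bound (t x : ℝ) (ht : 0 < t) (hx : 0 < x) :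
    ‖(deriv (fun z : ℂ => z / (z + 1) * Complex.exp (-(t : ℂ) / z))
          ((x : ℂ) + Real.sqrt (t * x) * I))‖
      ≥ Real.exp (-1) * t / ((1 + x) ^ 2 + x * t) := by
  set s : ℝ := Real.sqrt (t * x) with hsdef
  have hs2 : s ^ 2 = t * x := Real.sq_sqrt (by positivity)
  set z : ℂ := (x : ℂ) + (s : ℂ) * I with hzdef
  have hre : z.re = x := by simp [hzdef]
  have him : z.im = s := by simp [hzdef]
  have hz : z ≠ 0 := by
    intro h
    have : z.re = 0 := by rw [h]; simp
    rw [hre] at this; linarith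
  have hz1 : z + 1 ≠ 0 := by
    intro h
    have : (z + 1).re = 0 := by rw [h]; simp
    simp [Complex.add_re, hre] at this; linarith
  have hnsq : Complex.normSq z = x ^ 2 + t * x := by
    rw [Complex.normSq_apply, hre, him]
    nlinarith [hs2]
  -- derivative computation
  have hd1 : HasDerivAt (fun w : ℂ => w / (w + 1))
      ((1 * (z + 1) - z * 1) / (z + 1) ^ 2) z :=
    (hasDerivAt_id z).div ((hasDerivAt_id z).add_const 1) hz1
  have hd2 : HasDerivAt (fun w : ℂ => Complex.exp (-(t : ℂ) / w))
      (Complex.exp (-(t : ℂ) / z) * (-(t : ℂ) * (-((z ^ 2)⁻¹)))) z := by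
    have h0 : HasDerivAt (fun w : ℂ => -(t : ℂ) / w) (-(t : ℂ) * (-((z ^ 2)⁻¹))) z := by
      simpa [div_eq_mul_inv] using (hasDerivAt_inv hz).const_mul (-(t : ℂ))
    exact h0.cexp
  have hD : HasDerivAt (fun w : ℂ => w / (w + 1) * Complex.exp (-(t : ℂ) / w))
      ((1 * (z + 1) - z * 1) / (z + 1) ^ 2 * Complex.exp (-(t : ℂ) / z)
        + z / (z + 1) * (Complex.exp (-(t : ℂ) / z) * (-(t : ℂ) * (-((z ^ 2)⁻¹))))) z :=
    hd1.mul hd2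
  have hderiv : deriv (fun w : ℂ => w / (w + 1) * Complex.exp (-(t : ℂ) / w)) z
      = Complex.exp (-(t : ℂ) / z) * (((1 + (t : ℂ)) * z + t) / (z * (z + 1) ^ 2)) := by
    rw [hD.deriv]
    field_simp
    ring
  rw [hderiv]
  -- abs of the derivative
  have habsexp : ‖Complex.exp (-(t : ℂ) / z)‖ = Real.exp (-(t * x) / (x ^ 2 + t * x)) := by
    rw [Complex.norm_exp]
    congr 1
    rw [Complex.div_re, hnsq]
    simp [hre, him]
  -- lower bound on |(1+t)z+t|
  have hw : t * ‖z‖ ≤ ‖(1 + (t : ℂ)) * z + t‖ := by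
    have h1 : (t * ‖z‖) ^ 2 ≤ (‖(1 + (t : ℂ)) * z + t‖) ^ 2 := by
      rw [mul_pow, Complex.sq_norm, Complex.sq_norm, Complex.normSq_apply, Complex.normSq_apply]
      have hr : ((1 + (t : ℂ)) * z + t).re = (1 + t) * x + t := by
        simp [Complex.add_re, Complex.mul_re, hre, him]
      have hi : ((1 + (t : ℂ)) * z + t).im = (1 + t) * s := by
        simp [Complex.add_im, Complex.mul_im, hre, him]
      rw [hr, hi, hre, him]
      nlinarith [hs2, sq_nonneg s, ht.le, hx.le]
    have h2 := Real.sqrt_le_sqrt h1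
    rwa [Real.sqrt_sq (mul_nonneg ht.le (norm_nonneg _)), Real.sqrt_sq (norm_nonneg _)] at h2
  have habsz : 0 < ‖z‖ := norm_pos_iff.mpr hz
  have habsz1 : Complex.normSq (z + 1) = (1 + x) ^ 2 + t * x := by
    rw [Complex.normSq_apply]
    simp [Complex.add_re, Complex.add_im, hre, him]
    nlinarith [hs2]
  have hexp : Real.exp (-1) ≤ Real.exp (-(t * x) / (x ^ 2 + t * x)) := by
    apply Real.exp_le_exp.mpr
    rw [neg_div, neg_le_neg_iff]
    rw [div_le_one (by positivity)]
    nlinarith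
  rw [norm_mul, habsexp, norm_div, norm_mul, norm_pow]
  have habsz1' : (‖z + 1‖) ^ 2 = (1 + x) ^ 2 + t * x := by
    rw [Complex.sq_norm, habsz1]
  rw [habsz1']
  have hden : (0:ℝ) < (1 + x) ^ 2 + t * x := by positivity
  rw [ge_iff_le]
  have key : Real.exp (-1) * t / ((1 + x) ^ 2 + x * t)
      = Real.exp (-1) * (t * ‖z‖) / (‖z‖ * ((1 + x) ^ 2 + t * x)) := by
    field_simp
  rw [key, mul_div_assoc]
  gcongr
end
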